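/- Let C⁴ be a 4-cycle in a finite simple graph G. The following are equivalent: (a) each edge of C⁴ has the (P) property; (b) C⁴ has two disjoint edges with the (P) property; (c) |V(C⁴) ∩ C| = 2 for every minimal vertex cover C of G. -/
import Mathlib


/-- `C` is a vertex cover of `G`: every edge of `G` meets `C`. -/
def IsVC {V : Type*} (G : SimpleGraph V) (C : Finset V) : Prop :=
  ∀ ⦃u v : V⦄, G.Adj u v → u ∈ C ∨ v ∈ C

/-- `C` is a minimal vertex cover of `G`. -/
def IsMinVC {V : Type*} (G : SimpleGraph V) (C : Finset V) : Prop :=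
  IsVC G C ∧ ∀ D ⊆ C, IsVC G D → D = C

/-- The edge `{a, b}` has the (P) property. -/
def HasP {V : Type*} (G : SimpleGraph V) (a b : V) : Prop :=
  ∀ a' b' : V, G.Adj a a' → G.Adj b b' → a' ≠ b → b' ≠ a → G.Adj a' b'

/-- If opposite edges `{a,b}` and `{c,d}` of a 4-cycle `a b c d` have (P),
then so does `{b,c}`. -/
lemma hasP_key {V : Type*} (G : SimpleGraph V) {a b c d : V}
    (hab : G.Adj a b) (hbc : G.Adj b c) (hcd : G.Adj c d) (hda : G.Adj d a)
    (hac : a ≠ c) (hbd : b ≠ d)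
    (Pab : HasP G a b) (Pcd : HasP G c d) : HasP G b c := by
  intro x y hbx hcy hxc hyb
  by_cases hxa : x = a
  · by_cases hyd : y = d
    · rw [hxa, hyd]; exact hda.symm
    · rw [hxa]; exact (Pcd y a hcy hda hyd hac).symm
  · have hdx : G.Adj d x := Pab d x hda.symm hbx (Ne.symm hbd) hxa
    by_cases hyd : y = d
    · subst hyd; exact hdx.symm
    · exact (Pcd y x hcy hdx hyd hxc).symm

/-- Every vertex cover contains a minimal vertex cover. -/
lemma exists_minVC_subset {V : Type*} [DecidableEq V] (G : SimpleGraph V) :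
    ∀ C : Finset V, IsVC G C → ∃ D ⊆ C, IsMinVC G D := by
  intro C
  induction C using Finset.strongInductionOn with
  | _ C ih =>
    intro hC
    by_cases h : ∀ D ⊆ C, IsVC G D → D = C
    · exact ⟨C, le_refl _, hC, h⟩
    · push_neg at h
      obtain ⟨D, hDC, hD, hne⟩ := h
      obtain ⟨E, hED, hE⟩ := ih D (hDC.ssubset_of_ne hne) hD
      exact ⟨E, hED.trans hDC, hE⟩

/-- In a minimal vertex cover, every vertex has a neighbor outside the cover. -/
lemma minVC_priv {V : Type*} [DecidableEq V] (G : SimpleGraph V) {C : Finset V}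
    (hC : IsMinVC G C) {v : V} (hv : v ∈ C) : ∃ u, G.Adj v u ∧ u ∉ C := by
  by_contra h
  push_neg at h
  have hcov : IsVC G (C.erase v) := by
    intro x y hxy
    by_cases hx : x = v
    · subst hx
      exact Or.inr (Finset.mem_erase.2 ⟨(hxy.ne).symm, h y hxy⟩)
    · by_cases hy : y = v
      · subst hy
        exact Or.inl (Finset.mem_erase.2 ⟨hxy.ne, h x hxy.symm⟩)
      · rcases hC.1 hxy with hx' | hy'
        · exact Or.inl (Finset.mem_erase.2 ⟨hx, hx'⟩)
        · exact Or.inr (Finset.mem_erase.2 ⟨hy, hy'⟩)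
  have heq := hC.2 _ (Finset.erase_subset _ _) hcov
  rw [← heq] at hv
  exact Finset.notMem_erase v C hv

/-- A minimal vertex cover cannot contain both endpoints of a (P) edge. -/
lemma not_both_mem {V : Type*} [DecidableEq V] (G : SimpleGraph V) {C : Finset V}
    (hC : IsMinVC G C) {a b : V} (P : HasP G a b)
    (ha : a ∈ C) (hb : b ∈ C) : False := by
  obtain ⟨u, hau, hu⟩ := minVC_priv G hC ha
  obtain ⟨w, hbw, hw⟩ := minVC_priv G hC hb
  have hadj : G.Adj u w := P u w hau hbw (fun h => hu (h ▸ hb)) (fun h => hw (h ▸ ha))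
  rcases hC.1 hadj with h | h
  exacts [hu h, hw h]

/-- Helper: exactly one endpoint of each of two disjoint edges gives intersection card 2. -/
lemma inter_card_two {V : Type*} [DecidableEq V] (C : Finset V) (a b c d : V)
    (dac : a ≠ c) (dad : a ≠ d) (dbc : b ≠ c) (dbd : b ≠ d)
    (h1 : (a ∈ C ∧ b ∉ C) ∨ (b ∈ C ∧ a ∉ C))
    (h2 : (c ∈ C ∧ d ∉ C) ∨ (d ∈ C ∧ c ∉ C)) :
    (({a, b, c, d} : Finset V) ∩ C).card = 2 := by
  rcases h1 with ⟨ha, hb⟩ | ⟨hb, ha⟩ <;> rcases h2 with ⟨hc, hd⟩ | ⟨hd, hc⟩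
  · have hs : ({a, b, c, d} : Finset V) ∩ C = {a, c} := by
      ext z
      simp only [Finset.mem_inter, Finset.mem_insert, Finset.mem_singleton]
      constructor
      · rintro ⟨(rfl | rfl | rfl | rfl), hz⟩ <;> tauto
      · rintro (rfl | rfl) <;> exact ⟨by tauto, by assumption⟩
    rw [hs, Finset.card_insert_of_notMem (by simp [dac]), Finset.card_singleton]
  · have hs : ({a, b, c, d} : Finset V) ∩ C = {a, d} := by
      ext z
      simp only [Finset.mem_inter, Finset.mem_insert, Finset.mem_singleton]
      constructor
      · rintro ⟨(rfl | rfl | rfl | rfl), hz⟩ <;> tauto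
      · rintro (rfl | rfl) <;> exact ⟨by tauto, by assumption⟩
    rw [hs, Finset.card_insert_of_notMem (by simp [dad]), Finset.card_singleton]
  · have hs : ({a, b, c, d} : Finset V) ∩ C = {b, c} := by
      ext z
      simp only [Finset.mem_inter, Finset.mem_insert, Finset.mem_singleton]
      constructor
      · rintro ⟨(rfl | rfl | rfl | rfl), hz⟩ <;> tauto
      · rintro (rfl | rfl) <;> exact ⟨by tauto, by assumption⟩
    rw [hs, Finset.card_insert_of_notMem (by simp [dbc]), Finset.card_singleton]
  · have hs : ({a, b, c, d} : Finset V) ∩ C = {b, d} := by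
      ext z
      simp only [Finset.mem_inter, Finset.mem_insert, Finset.mem_singleton]
      constructor
      · rintro ⟨(rfl | rfl | rfl | rfl), hz⟩ <;> tauto
      · rintro (rfl | rfl) <;> exact ⟨by tauto, by assumption⟩
    rw [hs, Finset.card_insert_of_notMem (by simp [dbd]), Finset.card_singleton]

/-- If edge `{a,b}` fails (P) and `{c,d}` is another (disjoint) edge, there is a
minimal vertex cover meeting `{a,b,c,d}` in at least 3 vertices. -/
lemma fail_edge {V : Type*} [Fintype V] [DecidableEq V] (G : SimpleGraph V) {a b c d : V}
    (hab : G.Adj a b) (hcd : G.Adj c d)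
    (dac : a ≠ c) (dad : a ≠ d) (dbc : b ≠ c) (dbd : b ≠ d)
    (hnP : ¬ HasP G a b) :
    ∃ C : Finset V, IsMinVC G C ∧ (({a, b, c, d} : Finset V) ∩ C).card ≠ 2 := by
  unfold HasP at hnP
  push_neg at hnP
  obtain ⟨x, y, hax, hby, hxb, hya, hnxy⟩ := hnP
  have hC0 : IsVC G (Finset.univ \ ({x, y} : Finset V)) := by
    intro u v huv
    by_contra h
    push_neg at h
    obtain ⟨hu, hv⟩ := h
    simp only [Finset.mem_sdiff, Finset.mem_univ, true_and, not_not,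
      Finset.mem_insert, Finset.mem_singleton] at hu hv
    rcases hu with rfl | rfl <;> rcases hv with rfl | rfl
    · exact huv.ne rfl
    · exact hnxy huv
    · exact hnxy huv.symm
    · exact huv.ne rfl
  obtain ⟨D, hDsub, hD⟩ := exists_minVC_subset G _ hC0
  have hxD : x ∉ D := fun h => by
    have := hDsub h
    simp at this
  have hyD : y ∉ D := fun h => by
    have := hDsub h
    simp at this
  have haD : a ∈ D := (hD.1 hax).resolve_right hxD
  have hbD : b ∈ D := (hD.1 hby).resolve_right hyD
  refine ⟨D, hD, ?_⟩
  have hcard : 3 ≤ (({a, b, c, d} : Finset V) ∩ D).card := by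
    rcases hD.1 hcd with hcD | hdD
    · have hsub : ({a, b, c} : Finset V) ⊆ ({a, b, c, d} : Finset V) ∩ D := by
        intro z hz
        simp only [Finset.mem_insert, Finset.mem_singleton] at hz
        rcases hz with rfl | rfl | rfl <;>
          simp only [Finset.mem_inter, Finset.mem_insert, Finset.mem_singleton] <;> tauto
      have h3 : ({a, b, c} : Finset V).card = 3 := by
        rw [Finset.card_insert_of_notMem (by simp [hab.ne, dac]),
          Finset.card_insert_of_notMem (by simp [dbc]), Finset.card_singleton]
      calc 3 = ({a, b, c} : Finset V).card := h3.symm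
        _ ≤ _ := Finset.card_le_card hsub
    · have hsub : ({a, b, d} : Finset V) ⊆ ({a, b, c, d} : Finset V) ∩ D := by
        intro z hz
        simp only [Finset.mem_insert, Finset.mem_singleton] at hz
        rcases hz with rfl | rfl | rfl <;>
          simp only [Finset.mem_inter, Finset.mem_insert, Finset.mem_singleton] <;> tauto
      have h3 : ({a, b, d} : Finset V).card = 3 := by
        rw [Finset.card_insert_of_notMem (by simp [hab.ne, dad]),
          Finset.card_insert_of_notMem (by simp [dbd]), Finset.card_singleton]
      calc 3 = ({a, b, d} : Finset V).card := h3.symm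
        _ ≤ _ := Finset.card_le_card hsub
  omega

theorem fourCycle_P_property_equivalences
    {V : Type*} [Fintype V] [DecidableEq V] (G : SimpleGraph V)
    (t₁ t₂ t₃ t₄ : V)
    (h12 : G.Adj t₁ t₂) (h23 : G.Adj t₂ t₃) (h34 : G.Adj t₃ t₄) (h41 : G.Adj t₄ t₁)
    (d12 : t₁ ≠ t₂) (d13 : t₁ ≠ t₃) (d14 : t₁ ≠ t₄)
    (d23 : t₂ ≠ t₃) (d24 : t₂ ≠ t₄) (d34 : t₃ ≠ t₄) :
    ((HasP G t₁ t₂ ∧ HasP G t₂ t₃ ∧ HasP G t₃ t₄ ∧ HasP G t₄ t₁) ↔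
      ((HasP G t₁ t₂ ∧ HasP G t₃ t₄) ∨ (HasP G t₂ t₃ ∧ HasP G t₄ t₁))) ∧
    (((HasP G t₁ t₂ ∧ HasP G t₃ t₄) ∨ (HasP G t₂ t₃ ∧ HasP G t₄ t₁)) ↔
      (∀ C : Finset V, IsMinVC G C →
        (({t₁, t₂, t₃, t₄} : Finset V) ∩ C).card = 2)) := by
  have hset1 : ({t₂, t₃, t₄, t₁} : Finset V) = {t₁, t₂, t₃, t₄} := by
    ext z; simp only [Finset.mem_insert, Finset.mem_singleton]; tauto
  have hset2 : ({t₃, t₄, t₁, t₂} : Finset V) = {t₁, t₂, t₃, t₄} := by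
    ext z; simp only [Finset.mem_insert, Finset.mem_singleton]; tauto
  constructor
  · constructor
    · rintro ⟨p12, p23, p34, p41⟩
      exact Or.inl ⟨p12, p34⟩
    · rintro (⟨p12, p34⟩ | ⟨p23, p41⟩)
      · have p23 : HasP G t₂ t₃ := hasP_key G h12 h23 h34 h41 d13 d24 p12 p34
        have p41 : HasP G t₄ t₁ := hasP_key G h34 h41 h12 h23 d13.symm d24.symm p34 p12
        exact ⟨p12, p23, p34, p41⟩
      · have p34 : HasP G t₃ t₄ := hasP_key G h23 h34 h41 h12 d24 d13.symm p23 p41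
        have p12 : HasP G t₁ t₂ := hasP_key G h41 h12 h23 h34 d24.symm d13 p41 p23
        exact ⟨p12, p23, p34, p41⟩
  · constructor
    · rintro (⟨p12, p34⟩ | ⟨p23, p41⟩) C hC
      · have n12 : ¬ (t₁ ∈ C ∧ t₂ ∈ C) := fun ⟨h1, h2⟩ => not_both_mem G hC p12 h1 h2
        have n34 : ¬ (t₃ ∈ C ∧ t₄ ∈ C) := fun ⟨h3, h4⟩ => not_both_mem G hC p34 h3 h4
        have e12 := hC.1 h12
        have e34 := hC.1 h34
        exact inter_card_two C t₁ t₂ t₃ t₄ d13 d14 d23 d24 (by tauto) (by tauto)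
      · have n23 : ¬ (t₂ ∈ C ∧ t₃ ∈ C) := fun ⟨h2, h3⟩ => not_both_mem G hC p23 h2 h3
        have n41 : ¬ (t₄ ∈ C ∧ t₁ ∈ C) := fun ⟨h4, h1⟩ => not_both_mem G hC p41 h4 h1
        have e23 := hC.1 h23
        have e41 := hC.1 h41
        have := inter_card_two C t₂ t₃ t₄ t₁ d24 d12.symm d34 d13.symm (by tauto) (by tauto)
        rwa [hset1] at this
    · intro hc
      by_contra hnb
      rw [not_or] at hnb
      obtain ⟨h1, _⟩ := hnb
      rw [not_and_or] at h1
      rcases h1 with h | h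
      · obtain ⟨C, hC, hcard⟩ := fail_edge G h12 h34 d13 d14 d23 d24 h
        exact hcard (hc C hC)
      · obtain ⟨C, hC, hcard⟩ := fail_edge G h34 h12 d13.symm d23.symm d14.symm d24.symm h
        rw [hset2] at hcard
        exact hcard (hc C hC)
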